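/- arXiv:math/0008020 — 2 statements merged into one kernel-verified Lean document; each statement's English description precedes it below -/
import Mathlib

section
/- Let s be a partition having a slippery plateau of length l at 1 (l ≥ 2) and a cliff at l+1. Let t be the partition with s →_{l+1} t (a fall) and u the partition with t →_l u (a fall). Then t^{↓(l+1)} = u^{↓l}, s^{↓(l+1)} →_{l+1} u^{↓l}, and dirreach(s^{↓(l+1)}) = dirreach(s)^{↓(l+1)}. -/
/-!
Partitions are modelled as functions `s : ℕ → ℕ` (0-based: `s 0` is the first
part `s_1`), nonincreasing and eventually zero.  A paper index `i ≥ 1`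
(columns, transitions `→_i`, increments `s^{↓i}`) corresponds to the Lean
index `i - 1`.
-/

/-- `s` is a partition: nonincreasing and eventually zero. -/
def IsPartition (s : ℕ → ℕ) : Prop :=
  (∀ i, s (i + 1) ≤ s i) ∧ ∃ N, ∀ i, N ≤ i → s i = 0

/-- `j`-th suffix sum (0-based: `suff s 0` is the total sum `|s|`,
`suff s (j-1)` is the paper's `Σ_j`). -/
noncomputable def suff (s : ℕ → ℕ) (j : ℕ) : ℕ := ∑' i, s (j + i)

/-- `s` is a partition of `n`. -/
noncomputable def IsPartOf (n : ℕ) (s : ℕ → ℕ) : Prop := IsPartition s ∧ suff s 0 = n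

/-- Prefix sum of the first `j` parts. -/
def psum (s : ℕ → ℕ) (j : ℕ) : ℕ := ∑ i ∈ Finset.range j, s i

/-- Dominance ordering: `Dom s t` means `s ≥ t`, i.e. every prefix sum of `s`
is at least the corresponding prefix sum of `t`. -/
def Dom (s t : ℕ → ℕ) : Prop := ∀ j, psum t j ≤ psum s j

/-- `s^{↓(i+1)}`: add one grain on the (0-based) `i`-th column. -/
def incr (s : ℕ → ℕ) (i : ℕ) : ℕ → ℕ := Function.update s i (s i + 1)

/-- Move one grain from column `a` to column `b` (0-based). -/
def moveGrain (s : ℕ → ℕ) (a b : ℕ) : ℕ → ℕ :=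
  fun j => if j = a then s a - 1 else if j = b then s b + 1 else s j

/-- `s` has a cliff at (0-based) column `i`: `s_i ≥ s_{i+1} + 2`. -/
def Cliff (s : ℕ → ℕ) (i : ℕ) : Prop := s (i + 1) + 2 ≤ s i

/-- `s` has a slippery step at (0-based) column `i`, the plateau ending at
(0-based) column `m`:  `s_i - 1 = s_{i+1} = ⋯ = s_m = s_{m+1} + 1` (in 0-based
indices), with `m ≥ i + 1`. -/
def SlipAt (s : ℕ → ℕ) (i m : ℕ) : Prop :=
  i + 1 ≤ m ∧ (∀ j, i + 1 ≤ j → j ≤ m → s j + 1 = s i) ∧ s (m + 1) + 2 = s i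

/-- The transition `s →_{i+1} t` of the paper (0-based `i`): a fall from a
cliff at `i`, or a slip from a slippery step at `i` (the grain landing just
after the plateau). -/
def Step (s : ℕ → ℕ) (i : ℕ) (t : ℕ → ℕ) : Prop :=
  (Cliff s i ∧ t = moveGrain s i (i + 1)) ∨
  (∃ m, SlipAt s i m ∧ t = moveGrain s i (m + 1))

/-- The set of configurations directly reachable from `s`. -/
def dirreach (s : ℕ → ℕ) : Set (ℕ → ℕ) := {t | ∃ i, Step s i t}

/-- `s` has a (slippery, if `l ≥ 2`) plateau of length `l` at `1`:
`s_1 = s_2 = ⋯ = s_l = s_{l+1} + 1`. -/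
def SlipperyPlateau1 (s : ℕ → ℕ) (l : ℕ) : Prop :=
  (∀ j, j < l → s j = s 0) ∧ s l + 1 = s 0

/-- `s` has a non-slippery plateau at `1`:
`s_1 = ⋯ = s_l ≥ s_{l+1} + 2` for some `l ≥ 2`. -/
def NonSlipperyPlateau1 (s : ℕ → ℕ) : Prop :=
  ∃ l, 2 ≤ l ∧ (∀ j, j < l → s j = s 0) ∧ s l + 2 ≤ s 0

/-- `s` has a slippery step at `1`. -/
def SlipperyStep1 (s : ℕ → ℕ) : Prop := ∃ m, SlipAt s 0 m

/-- `s` has a non-slippery step at `1`: `s_1 = s_2 + 1` and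
`s_2 = ⋯ = s_m ≥ s_{m+1} + 2` for some `m ≥ 2` (here `m` is 0-based, `≥ 1`). -/
def NonSlipperyStep1 (s : ℕ → ℕ) : Prop :=
  s 0 = s 1 + 1 ∧ ∃ m, 1 ≤ m ∧ (∀ j, 1 ≤ j → j ≤ m → s j = s 1) ∧ s (m + 1) + 2 ≤ s 1

/-- `c` is the infimum of `a` and `b` in the dominance lattice `L_B(n)`. -/
noncomputable def IsInfOn (n : ℕ) (a b c : ℕ → ℕ) : Prop :=
  IsPartOf n c ∧ Dom a c ∧ Dom b c ∧ ∀ d, IsPartOf n d → Dom a d → Dom b d → Dom c d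

/-- `c` is the supremum of `a` and `b` in the dominance lattice `L_B(n)`. -/
noncomputable def IsSupOn (n : ℕ) (a b c : ℕ → ℕ) : Prop :=
  IsPartOf n c ∧ Dom c a ∧ Dom c b ∧ ∀ d, IsPartOf n d → Dom d a → Dom d b → Dom d c

/-- The order `≥_∞` on the set `P` of all partitions: `GeInf s t` means
`s ≥_∞ t`, i.e. every suffix sum of `s` is at most that of `t`. -/
noncomputable def GeInf (s t : ℕ → ℕ) : Prop := ∀ j, suff s j ≤ suff t j

/-- `c` is the infimum of `a` and `b` in `(P, ≥_∞)`. -/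
noncomputable def IsInfP (a b c : ℕ → ℕ) : Prop :=
  IsPartition c ∧ GeInf a c ∧ GeInf b c ∧
    ∀ d, IsPartition d → GeInf a d → GeInf b d → GeInf c d

/-- `c` is the supremum of `a` and `b` in `(P, ≥_∞)`. -/
noncomputable def IsSupP (a b c : ℕ → ℕ) : Prop :=
  IsPartition c ∧ GeInf c a ∧ GeInf c b ∧
    ∀ d, IsPartition d → GeInf d a → GeInf d b → GeInf d c

/-- The map `π`: delete the first part, `(s_1, s_2, …) ↦ (s_2, …)`. -/
def shift (s : ℕ → ℕ) : ℕ → ℕ := fun i => s (i + 1)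

/-!
A transition at a column only looks at the parts from that column on, so adding a grain on
column `l+1` leaves every transition at a later column intact, the extra grain being carried
along. At column `l+1` the cliff only gets steeper, so the fall stays the only transition there.
Before column `l+1` neither `s` nor `s^{↓(l+1)}` has a transition: both are flat there, except
for the unit step of `s` at column `l`, which is not slippery because the cliff follows it.
Finally, the fall `t →_l u` moves a grain from column `l` to column `l+1`, whence
`u^{↓l} = t^{↓(l+1)}`.
-/

section Transitions

variable {s s' v w : ℕ → ℕ} {i l : ℕ}

lemma moveGrain_incr_comm {a : ℕ} (b : ℕ) (h : 0 < s a) :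
    moveGrain (incr s l) a b = incr (moveGrain s a b) l := by
  funext j
  simp only [moveGrain, incr, Function.update_apply]
  split_ifs <;> subst_vars <;> omega

lemma moveGrain_incr_self {a b : ℕ} (hab : a ≠ b) : moveGrain (incr s a) a b = incr s b := by
  funext j
  simp only [moveGrain, incr, Function.update_apply]
  split_ifs <;> subst_vars <;> omega

lemma cliff_congr (h : ∀ j, i ≤ j → s j = s' j) : Cliff s i ↔ Cliff s' i := by
  simp only [Cliff, h i le_rfl, h (i + 1) (Nat.le_succ i)]

lemma slipAt_congr {m : ℕ} (h : ∀ j, i ≤ j → s j = s' j) :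
    SlipAt s i m ↔ SlipAt s' i m := by
  unfold SlipAt
  constructor <;> rintro ⟨him, hplateau, hend⟩
  · refine ⟨him, fun j hj hjm => ?_, ?_⟩
    · rw [← h j (by omega), ← h i le_rfl]; exact hplateau j hj hjm
    · rw [← h (m + 1) (by omega), ← h i le_rfl]; exact hend
  · refine ⟨him, fun j hj hjm => ?_, ?_⟩
    · rw [h j (by omega), h i le_rfl]; exact hplateau j hj hjm
    · rw [h (m + 1) (by omega), h i le_rfl]; exact hend

lemma Step.two_le (h : Step s i v) : 2 ≤ s i := by
  rcases h with ⟨hc, -⟩ | ⟨m, ⟨-, -, hend⟩, -⟩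
  · exact le_of_add_le_right hc
  · omega

lemma not_step_of_eq (h : s (i + 1) = s i) : ¬ Step s i v := by
  rintro (⟨hc, -⟩ | ⟨m, ⟨him, hplateau, -⟩, -⟩)
  · unfold Cliff at hc; omega
  · have := hplateau (i + 1) le_rfl him; omega

lemma not_step_of_cliff_succ (h : s (i + 1) + 1 = s i) (hc : Cliff s (i + 1)) :
    ¬ Step s i v := by
  unfold Cliff at hc
  rintro (⟨hc', -⟩ | ⟨m, ⟨him, hplateau, hend⟩, -⟩)
  · unfold Cliff at hc'; omega
  · rcases him.eq_or_lt with rfl | hm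
    · omega
    · have := hplateau (i + 1 + 1) (Nat.le_succ _) hm; omega

lemma step_iff_of_cliff (hc : Cliff s i) : Step s i v ↔ v = moveGrain s i (i + 1) := by
  refine ⟨?_, fun hv => Or.inl ⟨hc, hv⟩⟩
  rintro (⟨-, hv⟩ | ⟨m, ⟨him, hplateau, -⟩, -⟩)
  · exact hv
  · have := hplateau (i + 1) le_rfl him; unfold Cliff at hc; omega

lemma Cliff.incr_self (hc : Cliff s l) : Cliff (incr s l) l := by
  unfold Cliff at hc ⊢
  simp only [incr, Function.update_self, Function.update_of_ne (by omega : l + 1 ≠ l)]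
  omega

lemma step_incr_iff_of_lt (hi : l < i) :
    Step (incr s l) i w ↔ ∃ v, Step s i v ∧ incr v l = w := by
  have hagree : ∀ j, i ≤ j → incr s l j = s j :=
    fun j hj => Function.update_of_ne (by omega) _ _
  have hpos : Step (incr s l) i w ∨ (∃ v, Step s i v ∧ incr v l = w) → 0 < s i := by
    rintro (h | ⟨v, h, -⟩)
    · have := h.two_le; rw [hagree i le_rfl] at this; omega
    · have := h.two_le; omega
  constructor
  · intro h
    have hs := hpos (Or.inl h)
    rcases h with ⟨hc, rfl⟩ | ⟨m, hslip, rfl⟩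
    · exact ⟨_, Or.inl ⟨(cliff_congr hagree).1 hc, rfl⟩, (moveGrain_incr_comm _ hs).symm⟩
    · exact ⟨_, Or.inr ⟨m, (slipAt_congr hagree).1 hslip, rfl⟩,
        (moveGrain_incr_comm _ hs).symm⟩
  · intro h
    have hs := hpos (Or.inr h)
    obtain ⟨v, ⟨hc, rfl⟩ | ⟨m, hslip, rfl⟩, rfl⟩ := h
    · exact Or.inl ⟨(cliff_congr hagree).2 hc, (moveGrain_incr_comm _ hs).symm⟩
    · exact Or.inr ⟨m, (slipAt_congr hagree).2 hslip, (moveGrain_incr_comm _ hs).symm⟩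

lemma step_incr_iff_of_cliff (hc : Cliff s l) (hi : l ≤ i) :
    Step (incr s l) i w ↔ ∃ v, Step s i v ∧ incr v l = w := by
  rcases hi.eq_or_lt with rfl | hi
  · have hs : 0 < s l := by unfold Cliff at hc; omega
    simp only [step_iff_of_cliff hc, step_iff_of_cliff hc.incr_self, exists_eq_left,
      moveGrain_incr_comm _ hs, eq_comm]
  · exact step_incr_iff_of_lt hi

lemma dirreach_eq_image_of_step_iff (f : (ℕ → ℕ) → ℕ → ℕ)
    (h : ∀ i w, Step s' i w ↔ ∃ v, Step s i v ∧ f v = w) :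
    dirreach s' = f '' dirreach s := by
  ext w
  simp only [dirreach, Set.mem_ofPred_eq, Set.mem_image, h]
  constructor
  · rintro ⟨i, v, hv, rfl⟩; exact ⟨v, ⟨i, hv⟩, rfl⟩
  · rintro ⟨v, ⟨i, hv⟩, rfl⟩; exact ⟨i, v, hv, rfl⟩

end Transitions

section SlipperyPlateau

variable {s v : ℕ → ℕ} {i l : ℕ}

lemma SlipperyPlateau1.not_step (hp : SlipperyPlateau1 s l) (hc : Cliff s l) (hi : i < l) :
    ¬ Step s i v := by
  rcases (Nat.succ_le_of_lt hi).eq_or_lt with rfl | hi'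
  · exact not_step_of_cliff_succ (by rw [hp.1 i hi]; exact hp.2) hc
  · exact not_step_of_eq (by rw [hp.1 i hi, hp.1 (i + 1) hi'])

lemma SlipperyPlateau1.incr_apply_of_le (hp : SlipperyPlateau1 s l) {j : ℕ} (hj : j ≤ l) :
    incr s l j = s 0 := by
  rcases hj.eq_or_lt with rfl | hj
  · rw [incr, Function.update_self, hp.2]
  · rw [incr, Function.update_of_ne hj.ne, hp.1 j hj]

lemma SlipperyPlateau1.not_step_incr (hp : SlipperyPlateau1 s l) (hi : i < l) :
    ¬ Step (incr s l) i v :=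
  not_step_of_eq (by rw [hp.incr_apply_of_le hi, hp.incr_apply_of_le hi.le])

end SlipperyPlateau

theorem stmt9_general (s t u : ℕ → ℕ) (l : ℕ) (hl : 2 ≤ l)
    (hp : SlipperyPlateau1 s l) (hc : Cliff s l)
    (ht : t = moveGrain s l (l + 1)) (hu : u = moveGrain t (l - 1) l) :
    incr t l = incr u (l - 1) ∧
    Step (incr s l) l (incr u (l - 1)) ∧
    dirreach (incr s l) = (fun v => incr v l) '' dirreach s := by
  have htpos : 0 < t (l - 1) := by
    rw [ht, moveGrain, if_neg (by omega), if_neg (by omega), hp.1 (l - 1) (by omega), ← hp.2]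
    exact Nat.succ_pos _
  have hfalls : incr t l = incr u (l - 1) := by
    rw [hu, ← moveGrain_incr_comm _ htpos, moveGrain_incr_self (by omega)]
  have hsteps : ∀ i w, Step (incr s l) i w ↔ ∃ v, Step s i v ∧ incr v l = w := by
    intro i w
    rcases lt_or_ge i l with hi | hi
    · exact iff_of_false (hp.not_step_incr hi) (fun ⟨v, hv, _⟩ => hp.not_step hc hi hv)
    · exact step_incr_iff_of_cliff hc hi
  refine ⟨hfalls, ?_, dirreach_eq_image_of_step_iff _ hsteps⟩
  rw [← hfalls, hsteps]
  exact ⟨t, Or.inl ⟨hc, ht⟩, rfl⟩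

/-- If `s` has a slippery plateau of length `l ≥ 2` at `1`
and a cliff at `l+1`, with falls `s →_{l+1} t →_l u`, then
`t^{↓(l+1)} = u^{↓l}`, `s^{↓(l+1)} →_{l+1} u^{↓l}`, and
`dirreach(s^{↓(l+1)}) = dirreach(s)^{↓(l+1)}`. -/
theorem stmt9 (s t u : ℕ → ℕ) (l : ℕ) (hs : IsPartition s) (hl : 2 ≤ l)
    (hp : SlipperyPlateau1 s l) (hc : Cliff s l)
    (ht : t = moveGrain s l (l + 1)) (hu : u = moveGrain t (l - 1) l) :
    incr t l = incr u (l - 1) ∧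
    Step (incr s l) l (incr u (l - 1)) ∧
    dirreach (incr s l) = (fun v => incr v l) '' dirreach s :=
  stmt9_general s t u l hl hp hc ht hu
end

section
/- Define a one-step relation ⇒ on P by: s ⇒ t iff t = s^{↓1} (one grain is added on the first column), or s →_i t for some i ≥ 1 (a fall or a slip, which preserves the total sum). Then for all s, t ∈ P, t is reachable from s by a finite sequence of ⇒-steps if and only if s ≥_∞ t, i.e., Σ_j(s) ≤ Σ_j(t) for every j ≥ 1. -/
/-- The one-step relation `s ⇒ t`: add one grain on the first column, or
perform a fall or a slip. -/
def StepRel (s t : ℕ → ℕ) : Prop := t = incr s 0 ∨ ∃ i, Step s i t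

/-!
Every move carries one grain from a column `a` to a later column `b`, so it raises the suffix
sums `Σ_j` with `a < j ≤ b` by one and fixes the others, while adding a grain on the first
column raises only `|s|`; hence reachability implies `s ≥_∞ t`.

Conversely, first add `|t| - |s|` grains on the first column. If then `s ≠ t`, let `a` be the
first column where they differ, so that `s_a > t_a`. Walking along the plateau of `s` at height
`s_a`, and if necessary along the next one at height `s_a - 1`, we meet a fall or a slip whose
grain passes only over columns of height at least `s_a - 1 ≥ t_a ≥ t_k`. The suffix sums it
raises are therefore strictly below those of `t`, so `s ≥_∞ t` survives the move while
`∑_j (Σ_j(t) - Σ_j(s))` decreases.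
-/

open Finset

section SuffixSums

variable {s f g : ℕ → ℕ} {N : ℕ}

lemma suff_eq_sum_Ico (hs : ∀ i, N ≤ i → s i = 0) (j : ℕ) :
    suff s j = ∑ i ∈ Ico j N, s i := by
  rw [suff, tsum_eq_sum (s := range (N - j)) fun i hi => hs _ (by simp at hi; omega),
    sum_Ico_eq_sum_range]

lemma suff_eq_add_suff_succ (hs : ∀ i, N ≤ i → s i = 0) (j : ℕ) :
    suff s j = s j + suff s (j + 1) := by
  rw [suff_eq_sum_Ico hs, suff_eq_sum_Ico hs]
  rcases lt_or_ge j N with hj | hj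
  · exact sum_eq_sum_Ico_succ_bot hj s
  · simp [hs j hj, Ico_eq_empty_of_le, hj, hj.trans (Nat.le_succ j)]

lemma suff_eq_sum_Ico_add_suff (hs : ∀ i, N ≤ i → s i = 0) {i j : ℕ} (hij : i ≤ j) :
    suff s i = ∑ k ∈ Ico i j, s k + suff s j := by
  induction j, hij using Nat.le_induction with
  | base => simp
  | succ j hij ih => rw [ih, suff_eq_add_suff_succ hs j, sum_Ico_succ_top hij, add_assoc]

lemma suff_lt_suff_of_lt {t : ℕ → ℕ} (hs : ∀ i, N ≤ i → s i = 0) (ht : ∀ i, N ≤ i → t i = 0)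
    {a j : ℕ} (haj : a < j) (hsuff : suff s a ≤ suff t a) (ha : t a < s a)
    (hle : ∀ k ∈ Ico a j, t k ≤ s k) : suff s j < suff t j := by
  have hsum : ∑ k ∈ Ico a j, t k < ∑ k ∈ Ico a j, s k :=
    sum_lt_sum hle ⟨a, mem_Ico.2 ⟨le_rfl, haj⟩, ha⟩
  have := suff_eq_sum_Ico_add_suff hs haj.le
  have := suff_eq_sum_Ico_add_suff ht haj.le
  omega

lemma suff_add (hf : ∀ i, N ≤ i → f i = 0) (hg : ∀ i, N ≤ i → g i = 0) (j : ℕ) :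
    suff (f + g) j = suff f j + suff g j := by
  rw [suff_eq_sum_Ico hf, suff_eq_sum_Ico hg,
    suff_eq_sum_Ico fun i hi => by simp [hf i hi, hg i hi], ← sum_add_distrib, Pi.add_def]

lemma suff_single (b c j : ℕ) : suff (Pi.single b c) j = if j ≤ b then c else 0 := by
  rw [suff_eq_sum_Ico (N := b + 1) fun i hi => by simp [Pi.single_apply]; omega,
    sum_pi_single']
  simp

lemma suff_add_single (hs : ∀ i, N ≤ i → s i = 0) (b c j : ℕ) :
    suff (s + Pi.single b c) j = suff s j + if j ≤ b then c else 0 := by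
  rw [suff_add (N := N + b + 1) (fun i hi => hs i (by omega))
    (fun i hi => by simp [Pi.single_apply]; omega), suff_single]

end SuffixSums

section Moves

variable {s t : ℕ → ℕ} {N : ℕ}

lemma incr_eq_add_single (s : ℕ → ℕ) (i : ℕ) : incr s i = s + Pi.single i 1 := by
  ext j
  by_cases h : j = i <;> simp [incr, h]

lemma moveGrain_add_single {a b : ℕ} (hab : a ≠ b) (ha : 1 ≤ s a) :
    moveGrain s a b + Pi.single a 1 = s + Pi.single b 1 := by
  ext j
  simp only [moveGrain, Pi.add_apply, Pi.single_apply]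
  split_ifs <;> subst_vars <;> omega

lemma suff_moveGrain (hs : ∀ i, N ≤ i → s i = 0) {a b : ℕ} (hab : a < b) (ha : 1 ≤ s a)
    (j : ℕ) : suff (moveGrain s a b) j = suff s j + if a < j ∧ j ≤ b then 1 else 0 := by
  have hmove : ∀ i, N + b + 1 ≤ i → moveGrain s a b i = 0 := fun i hi => by
    simp only [moveGrain, if_neg (show i ≠ a by omega), if_neg (show i ≠ b by omega)]
    exact hs i (by omega)
  have key := suff_add_single hs b 1 j
  rw [← moveGrain_add_single hab.ne ha, suff_add_single hmove] at key
  split_ifs at key ⊢ <;> omega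

theorem Step.exists_eq_moveGrain {i : ℕ} (h : Step s i t) :
    ∃ b, i < b ∧ 1 ≤ s i ∧ t = moveGrain s i b := by
  rcases h with ⟨hc, rfl⟩ | ⟨m, ⟨him, -, hm⟩, rfl⟩
  · exact ⟨i + 1, by omega, by unfold Cliff at hc; omega, rfl⟩
  · exact ⟨m + 1, by omega, by omega, rfl⟩

theorem StepRel.geInf (hs : ∀ i, N ≤ i → s i = 0) (h : StepRel s t) : GeInf s t := by
  intro j
  rcases h with rfl | ⟨i, h⟩
  · rw [incr_eq_add_single, suff_add_single hs]
    omega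
  · obtain ⟨b, hib, hi, rfl⟩ := h.exists_eq_moveGrain
    rw [suff_moveGrain hs hib hi]
    omega

end Moves

section Partitions

variable {s t : ℕ → ℕ}

theorem IsPartition.antitone (hs : IsPartition s) : Antitone s :=
  antitone_nat_of_succ_le hs.1

theorem IsPartition.moveGrain_of_cliff {i : ℕ} (hs : IsPartition s) (h : Cliff s i) :
    IsPartition (moveGrain s i (i + 1)) := by
  obtain ⟨hmono, N, hN⟩ := hs
  unfold Cliff at h
  refine ⟨fun j => ?_, N + i + 2, fun j hj => ?_⟩
  · have := hmono j
    simp only [moveGrain]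
    split_ifs <;> subst_vars <;> omega
  · simp only [moveGrain, if_neg (show j ≠ i by omega), if_neg (show j ≠ i + 1 by omega)]
    exact hN j (by omega)

theorem IsPartition.moveGrain_of_slipAt {i m : ℕ} (hs : IsPartition s) (h : SlipAt s i m) :
    IsPartition (moveGrain s i (m + 1)) := by
  obtain ⟨hmono, N, hN⟩ := hs
  obtain ⟨him, hplat, hm⟩ := h
  refine ⟨fun j => ?_, N + m + 2, fun j hj => ?_⟩
  · have := hmono j
    have := hplat (i + 1) le_rfl him
    have := hplat m him le_rfl
    simp only [moveGrain, add_left_inj]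
    split_ifs <;> subst_vars <;> omega
  · simp only [moveGrain, if_neg (show j ≠ i by omega), if_neg (show j ≠ m + 1 by omega)]
    exact hN j (by omega)

theorem IsPartition.of_step {i : ℕ} (hs : IsPartition s) (h : Step s i t) : IsPartition t := by
  rcases h with ⟨hc, rfl⟩ | ⟨m, hm, rfl⟩
  exacts [hs.moveGrain_of_cliff hc, hs.moveGrain_of_slipAt hm]

theorem IsPartition.add_single_zero (hs : IsPartition s) (n : ℕ) :
    IsPartition (s + Pi.single 0 n) := by
  obtain ⟨hmono, N, hN⟩ := hs
  refine ⟨fun j => ?_, N + 1, fun j hj => ?_⟩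
  · rcases j with _ | j
    · simpa using (hmono 0).trans (Nat.le_add_right _ n)
    · simpa using hmono (j + 1)
  · simp [hN j (by omega), show j ≠ 0 by omega]

theorem IsPartition.of_stepRel (hs : IsPartition s) (h : StepRel s t) : IsPartition t := by
  rcases h with rfl | ⟨i, h⟩
  · rw [incr_eq_add_single]
    exact hs.add_single_zero 1
  · exact hs.of_step h

theorem IsPartition.isPartition_and_geInf_of_reflTransGen (hs : IsPartition s)
    (h : Relation.ReflTransGen StepRel s t) : IsPartition t ∧ GeInf s t := by
  induction h with
  | refl => exact ⟨hs, fun _ => le_rfl⟩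
  | tail _ huv ih =>
    obtain ⟨hu, hsu⟩ := ih
    obtain ⟨N, huN⟩ := hu.2
    exact ⟨hu.of_stepRel huv, fun j => (hsu j).trans (huv.geInf huN j)⟩

theorem IsPartition.exists_plateau_end (hs : IsPartition s) {a : ℕ} (ha : 1 ≤ s a) :
    ∃ b, a ≤ b ∧ s b = s a ∧ s (b + 1) < s a := by
  obtain ⟨N, hN⟩ := hs.2
  have hex : ∃ k, s (a + k + 1) < s a := ⟨N, by rw [hN _ (by omega)]; omega⟩
  refine ⟨a + Nat.find hex, by omega, ?_, Nat.find_spec hex⟩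
  rcases hk : Nat.find hex with _ | k
  · rfl
  · have := Nat.find_min hex (m := k) (by omega)
    have := hs.antitone (show a ≤ a + k + 1 by omega)
    rw [← add_assoc]
    omega

theorem IsPartition.exists_step_near (hs : IsPartition s) {a : ℕ} (ha : 2 ≤ s a) :
    ∃ i b, a ≤ i ∧ i < b ∧ Step s i (moveGrain s i b) ∧
      ∀ k, a ≤ k → k < b → s a ≤ s k + 1 := by
  obtain ⟨b₁, hab₁, hb₁, hb₁'⟩ := hs.exists_plateau_end (a := a) (by omega)
  by_cases hfall₁ : Cliff s b₁
  · refine ⟨b₁, b₁ + 1, hab₁, by omega, Or.inl ⟨hfall₁, rfl⟩, fun k _ hk => ?_⟩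
    have := hs.antitone (show k ≤ b₁ by omega)
    omega
  unfold Cliff at hfall₁
  obtain ⟨b₂, hb₁b₂, hb₂, hb₂'⟩ := hs.exists_plateau_end (a := b₁ + 1) (by omega)
  have hnear : ∀ k, a ≤ k → k ≤ b₂ → s a ≤ s k + 1 := fun k _ hk => by
    have := hs.antitone hk
    omega
  by_cases hfall₂ : Cliff s b₂
  · exact ⟨b₂, b₂ + 1, by omega, by omega, Or.inl ⟨hfall₂, rfl⟩,
      fun k hak hk => hnear k hak (by omega)⟩
  unfold Cliff at hfall₂
  have hslip : SlipAt s b₁ b₂ := ⟨hb₁b₂, fun j hj hj' => by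
    have := hs.antitone hj
    have := hs.antitone hj'
    omega, by omega⟩
  exact ⟨b₁, b₂ + 1, hab₁, by omega, Or.inr ⟨b₂, hslip, rfl⟩,
    fun k hak hk => hnear k hak (by omega)⟩

end Partitions

section Reachability

open Relation

variable {s t : ℕ → ℕ}

theorem GeInf.suff_eq_and_lt_of_first_diff {N : ℕ} (hst : GeInf s t)
    (hs : ∀ i, N ≤ i → s i = 0) (ht : ∀ i, N ≤ i → t i = 0) (h0 : suff s 0 = suff t 0)
    {a : ℕ} (hpre : ∀ k < a, s k = t k) (hdiff : s a ≠ t a) :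
    suff s a = suff t a ∧ t a < s a := by
  have hsuffa : suff s a = suff t a := by
    have hs0 := suff_eq_sum_Ico_add_suff hs (Nat.zero_le a)
    have ht0 := suff_eq_sum_Ico_add_suff ht (Nat.zero_le a)
    have hprefix : ∑ k ∈ Ico 0 a, s k = ∑ k ∈ Ico 0 a, t k :=
      sum_congr rfl fun k hk => hpre k (mem_Ico.1 hk).2
    omega
  refine ⟨hsuffa, ?_⟩
  have := hst (a + 1)
  rw [suff_eq_add_suff_succ hs, suff_eq_add_suff_succ ht] at hsuffa
  omega

theorem GeInf.exists_step (hst : GeInf s t) (hs : IsPartition s) (ht : IsPartition t)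
    (h0 : suff s 0 = suff t 0) (hne : s ≠ t) :
    ∃ a b, a < b ∧ 1 ≤ s a ∧ Step s a (moveGrain s a b) ∧ GeInf (moveGrain s a b) t := by
  obtain ⟨Ns, hsN⟩ := hs.2
  obtain ⟨Nt, htN⟩ := ht.2
  replace hsN : ∀ i, Ns + Nt ≤ i → s i = 0 := fun i hi => hsN i (by omega)
  replace htN : ∀ i, Ns + Nt ≤ i → t i = 0 := fun i hi => htN i (by omega)
  have hex := Function.ne_iff.1 hne
  obtain ⟨hsuffa, hlt⟩ := hst.suff_eq_and_lt_of_first_diff hsN htN h0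
    (fun k hk => not_not.1 (Nat.find_min hex hk)) (Nat.find_spec hex)
  set a := Nat.find hex
  have h2 : 2 ≤ s a := by
    by_contra!
    have htz : ∀ k, a ≤ k → t k = 0 := fun k hk => by
      have := ht.antitone hk
      omega
    have := suff_eq_add_suff_succ hsN a
    rw [suff_eq_sum_Ico htz, Ico_self, sum_empty] at hsuffa
    omega
  obtain ⟨i, b, hai, hib, hstep, hnear⟩ := hs.exists_step_near h2
  have hsi : 1 ≤ s i := by
    have := hnear i hai hib
    omega
  refine ⟨i, b, hib, hsi, hstep, fun j => ?_⟩
  rw [suff_moveGrain hsN hib hsi]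
  split_ifs with hj
  · suffices suff s j < suff t j by omega
    refine suff_lt_suff_of_lt hsN htN (by omega) hsuffa.le hlt fun k hk => ?_
    obtain ⟨hak, hkj⟩ := mem_Ico.1 hk
    have := ht.antitone hak
    have := hnear k hak (by omega)
    omega
  · simpa using hst j

theorem reflTransGen_stepRel_of_geInf (hs : IsPartition s) (ht : IsPartition t) (hst : GeInf s t)
    (h0 : suff s 0 = suff t 0) : ReflTransGen StepRel s t := by
  obtain ⟨N, htN⟩ := ht.2
  induction hd : ∑ j ∈ range N, (suff t j - suff s j) using Nat.strong_induction_on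
    generalizing s with
  | _ d ih =>
  by_cases hne : s = t
  · subst hne
    exact .refl
  obtain ⟨a, b, hab, ha, hstep, hst'⟩ := hst.exists_step hs ht h0 hne
  obtain ⟨M, hsM⟩ := hs.2
  have hmove := suff_moveGrain hsM hab ha
  refine .head (Or.inr ⟨a, hstep⟩) (ih _ ?_ (hs.of_step hstep) hst' ?_ rfl)
  · have hgain : suff (moveGrain s a b) (a + 1) = suff s (a + 1) + 1 := by
      rw [hmove, if_pos (by omega)]
    have haN : a + 1 < N := by
      by_contra! hNa
      have := hst' (a + 1)
      rw [suff_eq_sum_Ico htN, Ico_eq_empty_of_le hNa, sum_empty] at this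
      omega
    rw [← hd]
    refine sum_lt_sum (fun j _ => ?_) ⟨a + 1, mem_range.2 haN, ?_⟩
    · have := hmove j
      have := hst' j
      split_ifs at * <;> omega
    · have := hst' (a + 1)
      omega
  · simpa [hmove 0] using h0

theorem reflTransGen_add_single_zero (s : ℕ → ℕ) (n : ℕ) :
    ReflTransGen StepRel s (s + Pi.single 0 n) := by
  induction n with
  | zero => rw [Pi.single_zero, add_zero]
  | succ n ih =>
    refine ih.tail (Or.inl ?_)
    rw [incr_eq_add_single, add_assoc, ← Pi.single_add]

end Reachability

/-- For partitions `s, t`, `t` is reachable from `s` by a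
finite sequence of `⇒`-steps iff `s ≥_∞ t`, i.e. `Σ_j(s) ≤ Σ_j(t)` for all
`j`. -/
theorem stmt15 (s t : ℕ → ℕ) (hs : IsPartition s) (ht : IsPartition t) :
    Relation.ReflTransGen StepRel s t ↔ ∀ j, suff s j ≤ suff t j := by
  refine ⟨fun h => (hs.isPartition_and_geInf_of_reflTransGen h).2, fun hst => ?_⟩
  obtain ⟨N, hsN⟩ := hs.2
  set n := suff t 0 - suff s 0
  have hst' : GeInf (s + Pi.single 0 n) t := fun j => by
    rw [suff_add_single hsN]
    split_ifs with hj
    · obtain rfl : j = 0 := by omega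
      have := hst 0
      omega
    · simpa using hst j
  have h0 : suff (s + Pi.single 0 n) 0 = suff t 0 := by
    have := hst 0
    rw [suff_add_single hsN, if_pos le_rfl]
    omega
  exact (reflTransGen_add_single_zero s n).trans
    (reflTransGen_stepRel_of_geInf (hs.add_single_zero n) ht hst' h0)
end
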